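/- arXiv:2407.01053 — 5 statements merged into one kernel-verified Lean document; each statement's English description precedes it below -/
import Mathlib

section
/- Deterministic single-scenario version of Proposition 1, item 1 (equivalence of the two electricity allocation problems): let F : ℝ → ℝ be monotone (nondecreasing). Then the infimum (Real.sInf) of the set of nonlinear costs with final cost F taken over all admissible allocations equals the infimum (Real.sInf) of the set of linear costs with final cost F taken over all admissible extended allocations. -/
open Finset

/-- A pair of sequences `(a, g)` is an admissible electricity allocation. -/
def AdmissibleAlloc (H : ℕ) (Eppa Emax Eglow : ℝ) (pv : Fin H → ℝ)
    (a g : Fin H → ℝ) : Prop :=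
  ∀ h : Fin H, 0 ≤ a h ∧ (∑ h' ∈ Finset.Iic h, a h') ≤ Eppa ∧
    a h + g h + pv h ≤ Emax ∧ Eglow ≤ g h

/-- The nonlinear cost of an allocation `(a, g)` with final cost `F`. -/
def NonlinCost (H : ℕ) (p Emax : ℝ) (pv : Fin H → ℝ)
    (L : Fin H → ℝ → ℝ → ℝ) (F : ℝ → ℝ) (a g : Fin H → ℝ) : ℝ :=
  (∑ h, L h (a h) (g h)) +
    F (∑ h, ((1 - p) * max (g h) 0 - p * min Emax (a h + pv h)))

/-- A quadruple `(a, g, n, r)` is an admissible extended allocation. -/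
def AdmissibleExtAlloc (H : ℕ) (Eppa Emax Eglow : ℝ) (pv : Fin H → ℝ)
    (a g n r : Fin H → ℝ) : Prop :=
  AdmissibleAlloc H Eppa Emax Eglow pv a g ∧
    ∀ h : Fin H, 0 ≤ n h ∧ g h ≤ n h ∧ r h ≤ Emax ∧ r h ≤ a h + pv h

/-- The linear cost of an extended allocation `(a, g, n, r)` with final cost `F`. -/
def LinCost (H : ℕ) (p : ℝ) (L : Fin H → ℝ → ℝ → ℝ) (F : ℝ → ℝ)
    (a g n r : Fin H → ℝ) : ℝ :=
  (∑ h, L h (a h) (g h)) + F (∑ h, ((1 - p) * n h - p * r h))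

lemma sInf_eq_of_subset_of_le (S T : Set ℝ) (hST : S ⊆ T)
    (h : ∀ t ∈ T, ∃ s ∈ S, s ≤ t) : sInf S = sInf T := by
  rcases T.eq_empty_or_nonempty with hT | hT
  · subst hT
    rw [Set.subset_empty_iff.mp hST]
  · obtain ⟨t0, ht0⟩ := hT
    obtain ⟨s0, hs0, _⟩ := h t0 ht0
    by_cases hbdd : BddBelow S
    · obtain ⟨b, hb⟩ := hbdd
      have hbT : BddBelow T := ⟨b, fun t ht => by
        obtain ⟨s, hs, hst⟩ := h t ht
        exact le_trans (hb hs) hst⟩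
      apply le_antisymm
      · exact le_csInf ⟨t0, ht0⟩ (fun t ht => by
          obtain ⟨s, hs, hst⟩ := h t ht
          exact le_trans (csInf_le ⟨b, hb⟩ hs) hst)
      · exact csInf_le_csInf hbT ⟨s0, hs0⟩ hST
    · have hbddT : ¬ BddBelow T := fun ⟨b, hb⟩ =>
        hbdd ⟨b, fun s hs => hb (hST hs)⟩
      rw [Real.sInf_of_not_bddBelow hbdd, Real.sInf_of_not_bddBelow hbddT]

/-- Deterministic single-scenario version of Proposition 1, item 1:
for a nondecreasing final cost `F`, the infimum of the nonlinear costs over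
admissible allocations equals the infimum of the linear costs over admissible
extended allocations. -/
theorem inf_nonlinear_eq_inf_linear
    (H : ℕ) (p Emax Eppa Eglow : ℝ)
    (hp : p ∈ Set.Icc (0 : ℝ) 1) (hEmax : 0 ≤ Emax) (hEppa : 0 ≤ Eppa)
    (pv : Fin H → ℝ) (hpv : ∀ h, 0 ≤ pv h)
    (L : Fin H → ℝ → ℝ → ℝ)
    (F : ℝ → ℝ) (hF : Monotone F) :
    sInf {c : ℝ | ∃ a g : Fin H → ℝ,
        AdmissibleAlloc H Eppa Emax Eglow pv a g ∧
          c = NonlinCost H p Emax pv L F a g} =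
    sInf {c : ℝ | ∃ a g n r : Fin H → ℝ,
        AdmissibleExtAlloc H Eppa Emax Eglow pv a g n r ∧
          c = LinCost H p L F a g n r} := by
  obtain ⟨hp0, hp1⟩ := hp
  apply sInf_eq_of_subset_of_le
  · rintro c ⟨a, g, hag, rfl⟩
    refine ⟨a, g, fun h => max (g h) 0, fun h => min Emax (a h + pv h),
      ⟨hag, fun h => ⟨le_max_right _ _, le_max_left _ _, min_le_left _ _,
        min_le_right _ _⟩⟩, rfl⟩
  · rintro t ⟨a, g, n, r, ⟨hag, hnr⟩, rfl⟩
    refine ⟨NonlinCost H p Emax pv L F a g, ⟨a, g, hag, rfl⟩, ?_⟩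
    unfold NonlinCost LinCost
    gcongr
    apply hF
    apply Finset.sum_le_sum
    intro h _
    obtain ⟨hn0, hgn, hrE, hra⟩ := hnr h
    have h1 : (1 - p) * max (g h) 0 ≤ (1 - p) * n h :=
      mul_le_mul_of_nonneg_left (max_le hgn hn0) (by linarith)
    have h2 : p * r h ≤ p * min Emax (a h + pv h) :=
      mul_le_mul_of_nonneg_left (le_min hrE hra) hp0
    linarith
end

section
/- For every admissible allocation (a, g), the quadruple (a, g, n, r) defined by n h = max (g h) 0 and r h = min Emax (a h + pv h) for every h is an admissible extended allocation, and for every function F : ℝ → ℝ its linear cost with final cost F equals the nonlinear cost of (a, g) with final cost F. -/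
open Finset

/-- From an admissible allocation `(a, g)`, the quadruple obtained by setting
`n h = max (g h) 0` and `r h = min Emax (a h + pv h)` is an admissible extended
allocation whose linear cost equals the nonlinear cost of `(a, g)`, for every
final cost `F`. -/
theorem admissible_to_extended
    (H : ℕ) (p Emax Eppa Eglow : ℝ)
    (hp : p ∈ Set.Icc (0 : ℝ) 1) (hEmax : 0 ≤ Emax) (hEppa : 0 ≤ Eppa)
    (pv : Fin H → ℝ) (hpv : ∀ h, 0 ≤ pv h)
    (L : Fin H → ℝ → ℝ → ℝ)
    (a g : Fin H → ℝ)
    (hadm : AdmissibleAlloc H Eppa Emax Eglow pv a g) :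
    AdmissibleExtAlloc H Eppa Emax Eglow pv a g
        (fun h => max (g h) 0) (fun h => min Emax (a h + pv h)) ∧
      ∀ F : ℝ → ℝ,
        LinCost H p L F a g (fun h => max (g h) 0)
            (fun h => min Emax (a h + pv h)) =
          NonlinCost H p Emax pv L F a g := by
  refine ⟨⟨hadm, fun h => ⟨le_max_right _ _, le_max_left _ _,
    min_le_left _ _, min_le_right _ _⟩⟩, fun F => rfl⟩
end

section
/- Let F : ℝ → ℝ be monotone (nondecreasing). For every admissible extended allocation (a, g, n, r), the pair (a, g) is an admissible allocation and its nonlinear cost with final cost F is at most the linear cost of (a, g, n, r) with final cost F. -/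
open Finset

/-- For a nondecreasing final cost `F`, from an admissible extended allocation
`(a, g, n, r)` the pair `(a, g)` is an admissible allocation whose nonlinear
cost is at most the linear cost of `(a, g, n, r)`. -/
theorem extended_to_admissible
    (H : ℕ) (p Emax Eppa Eglow : ℝ)
    (hp : p ∈ Set.Icc (0 : ℝ) 1) (hEmax : 0 ≤ Emax) (hEppa : 0 ≤ Eppa)
    (pv : Fin H → ℝ) (hpv : ∀ h, 0 ≤ pv h)
    (L : Fin H → ℝ → ℝ → ℝ)
    (F : ℝ → ℝ) (hF : Monotone F)
    (a g n r : Fin H → ℝ)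
    (hadm : AdmissibleExtAlloc H Eppa Emax Eglow pv a g n r) :
    AdmissibleAlloc H Eppa Emax Eglow pv a g ∧
      NonlinCost H p Emax pv L F a g ≤ LinCost H p L F a g n r := by
  obtain ⟨hadm1, hadm2⟩ := hadm
  refine ⟨hadm1, ?_⟩
  unfold NonlinCost LinCost
  gcongr _ + ?_
  apply hF
  apply Finset.sum_le_sum
  intro h _
  obtain ⟨hn0, hgn, hrE, hra⟩ := hadm2 h
  have h1 : max (g h) 0 ≤ n h := max_le hgn hn0
  have h2 : r h ≤ min Emax (a h + pv h) := le_min hrE hra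
  have hp0 : 0 ≤ p := hp.1
  have hp1 : 0 ≤ 1 - p := by linarith [hp.2]
  nlinarith
end

section
/- Pointwise final-cost comparison along feasible trajectories: let H : ℕ with H ≥ 1, p ∈ [0,1) , Emax > 0, cs ≥ 0, and β₁, β₂ ∈ ℝ with 0 ≤ β₁ < β₂ ≤ cs / ((H : ℝ)*(1-p)*Emax). Let a, pv, g : Fin H → ℝ satisfy a h ≥ 0, pv h ≥ 0 and a h + g h + pv h ≤ Emax for every h, and set Q = ∑ h, ((1-p)*max (g h) 0 - p*min Emax (a h + pv h)). Then max (β₁*Q) (β₂*Q) - cs ≤ K Q, where K : ℝ → ℝ is defined by K x = -cs if x ≤ 0 and K x = 0 otherwise. -/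
open Finset

/-- Pointwise final-cost comparison along feasible trajectories. -/
theorem surrogate_le_subsidy_on_trajectory
    (H : ℕ) (hH : 1 ≤ H) (p Emax cs β₁ β₂ : ℝ)
    (hp : p ∈ Set.Ico (0 : ℝ) 1) (hEmax : 0 < Emax) (hcs : 0 ≤ cs)
    (hβ₁ : 0 ≤ β₁) (hβ : β₁ < β₂)
    (hβ₂ : β₂ ≤ cs / ((H : ℝ) * (1 - p) * Emax))
    (a pv g : Fin H → ℝ)
    (ha : ∀ h, 0 ≤ a h) (hpv : ∀ h, 0 ≤ pv h)
    (hE : ∀ h, a h + g h + pv h ≤ Emax) :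
    max (β₁ * (∑ h, ((1 - p) * max (g h) 0 - p * min Emax (a h + pv h))))
        (β₂ * (∑ h, ((1 - p) * max (g h) 0 - p * min Emax (a h + pv h)))) - cs ≤
      (if (∑ h, ((1 - p) * max (g h) 0 - p * min Emax (a h + pv h))) ≤ 0
        then -cs else 0) := by
  obtain ⟨hp0, hp1⟩ := hp
  set Q := ∑ h, ((1 - p) * max (g h) 0 - p * min Emax (a h + pv h)) with hQ
  have h1p : 0 < 1 - p := by linarith
  have hβ₂0 : 0 < β₂ := lt_of_le_of_lt hβ₁ hβ
  by_cases hQ0 : Q ≤ 0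
  · simp only [if_pos hQ0]
    have h1 : β₁ * Q ≤ 0 := mul_nonpos_of_nonneg_of_nonpos hβ₁ hQ0
    have h2 : β₂ * Q ≤ 0 := mul_nonpos_of_nonneg_of_nonpos hβ₂0.le hQ0
    have := max_le h1 h2
    linarith
  · simp only [if_neg hQ0]
    push_neg at hQ0
    have hbound : Q ≤ (H : ℝ) * ((1 - p) * Emax) := by
      rw [hQ]
      calc ∑ h, ((1 - p) * max (g h) 0 - p * min Emax (a h + pv h))
          ≤ ∑ _h : Fin H, (1 - p) * Emax := by
            apply Finset.sum_le_sum
            intro h _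
            have hmin : 0 ≤ min Emax (a h + pv h) :=
              le_min hEmax.le (add_nonneg (ha h) (hpv h))
            have hg : max (g h) 0 ≤ Emax := by
              have := hE h
              have := ha h; have := hpv h
              exact max_le (by linarith) hEmax.le
            nlinarith [mul_nonneg hp0 hmin]
        _ = (H : ℝ) * ((1 - p) * Emax) := by
            rw [Finset.sum_const, Finset.card_univ, Fintype.card_fin]; ring
    have hden : 0 < (H : ℝ) * (1 - p) * Emax := by
      have : (0:ℝ) < H := by exact_mod_cast hH
      positivity
    have hcsb : β₂ * ((H:ℝ) * (1 - p) * Emax) ≤ cs := by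
      rw [div_eq_inv_mul] at hβ₂
      calc β₂ * ((H:ℝ) * (1 - p) * Emax)
          ≤ (((H:ℝ) * (1 - p) * Emax)⁻¹ * cs) * ((H:ℝ) * (1 - p) * Emax) := by
            apply mul_le_mul_of_nonneg_right hβ₂ hden.le
        _ = cs := by field_simp
    have h2 : β₂ * Q ≤ cs := by
      calc β₂ * Q ≤ β₂ * ((H:ℝ) * ((1 - p) * Emax)) :=
            mul_le_mul_of_nonneg_left hbound hβ₂0.le
        _ = β₂ * ((H:ℝ) * (1 - p) * Emax) := by ring
        _ ≤ cs := hcsb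
    have h1 : β₁ * Q ≤ β₂ * Q := mul_le_mul_of_nonneg_right hβ.le hQ0.le
    have := max_le (h1.trans h2) h2
    linarith
end

section
/- Lemma 1 (lower bound on the Lagrange multiplier): in the perturbed-problem setup, suppose (x⁰, y⁰, u⁰) is 0-feasible with cost equal to ψ(0), that x⁰ h' > 0 and y⁰ h' > 0, and that λ ∈ ℝ satisfies ψ(0) - λ*ε ≤ ψ(ε) for every ε ≥ 0 (the subgradient inequality furnished by a saddle point of the Lagrangian obtained by dualizing the h'-th constraint). Then λ ≥ (α h' * b h' + β h' * a h') / (a h' + b h'). -/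
open Finset

/-- A triple `(x, y, u)` is `ε`-feasible for the perturbed problem. -/
def PertFeasible (H m : ℕ) (h' : Fin H) (g : Fin H → (Fin m → ℝ) → ℝ)
    (Cu : Set (Fin H → Fin m → ℝ)) (Cy : Set (Fin H → ℝ)) (ε : ℝ)
    (x y : Fin H → ℝ) (u : Fin H → Fin m → ℝ) : Prop :=
  u ∈ Cu ∧ y ∈ Cy ∧ (∀ h, h ≠ h' → g h (u h) ≤ x h + y h) ∧
    g h' (u h') ≤ x h' + y h' + ε ∧ (∀ h, 0 ≤ x h) ∧ (∀ h, 0 ≤ y h)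

/-- The cost of a triple `(x, y, u)`. -/
def PertCost (H m : ℕ) (α β a b : Fin H → ℝ)
    (f : (Fin H → Fin m → ℝ) → ℝ) (K : ℝ → ℝ)
    (x y : Fin H → ℝ) (u : Fin H → Fin m → ℝ) : ℝ :=
  (∑ h, (α h * x h + β h * y h)) + f u + K (∑ h, (a h * x h - b h * y h))

/-- The optimal value `ψ(ε)` of the perturbed problem. -/
noncomputable def psi (H m : ℕ) (h' : Fin H) (α β a b : Fin H → ℝ)
    (g : Fin H → (Fin m → ℝ) → ℝ) (Cu : Set (Fin H → Fin m → ℝ))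
    (Cy : Set (Fin H → ℝ)) (f : (Fin H → Fin m → ℝ) → ℝ) (K : ℝ → ℝ)
    (ε : ℝ) : ℝ :=
  sInf {c : ℝ | ∃ x y : Fin H → ℝ, ∃ u : Fin H → Fin m → ℝ,
    PertFeasible H m h' g Cu Cy ε x y u ∧ c = PertCost H m α β a b f K x y u}

/-!
Lowering `x h'` by `r * b h'` and `y h'` by `r * a h'` leaves the argument of `K` unchanged,
relaxes the `h'`-th constraint by `r * (a h' + b h')` and lowers the cost by
`r * (α h' * b h' + β h' * a h')`; this is possible for small `r > 0` because `x0 h'` and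
`y0 h'` are positive. Hence `ψ(r (a h' + b h')) ≤ ψ(0) - r (α h' b h' + β h' a h')`, and the
subgradient inequality at `ε = r (a h' + b h')` gives the bound.
-/

theorem Finset.sum_mul_sub_single {ι : Type*} [Fintype ι] [DecidableEq ι]
    (c x : ι → ℝ) (i : ι) (s : ℝ) :
    ∑ h, c h * (x - Pi.single i s : ι → ℝ) h = ∑ h, c h * x h - c i * s := by
  simp [mul_sub, Finset.sum_sub_distrib, Pi.single_apply]

section Perturbed

variable {H m : ℕ} {h' : Fin H} {α β a b : Fin H → ℝ} {g : Fin H → (Fin m → ℝ) → ℝ}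
  {Cu : Set (Fin H → Fin m → ℝ)} {Cy : Set (Fin H → ℝ)} {f : (Fin H → Fin m → ℝ) → ℝ}
  {K : ℝ → ℝ} {x y : Fin H → ℝ} {u : Fin H → Fin m → ℝ} {ε s t : ℝ}

theorem PertFeasible.sub_single (hfeas : PertFeasible H m h' g Cu Cy ε x y u)
    (hCy : IsLowerSet Cy) (hsx : s ≤ x h') (ht : 0 ≤ t) (hty : t ≤ y h') :
    PertFeasible H m h' g Cu Cy (ε + (s + t)) (x - Pi.single h' s) (y - Pi.single h' t) u := by
  obtain ⟨hu, hyC, hg, hg', hx, hy⟩ := hfeas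
  refine ⟨hu, hCy (sub_le_self y (Pi.single_nonneg.2 ht)) hyC, fun h hh => ?_, ?_,
    fun h => ?_, fun h => ?_⟩
  · simpa [Pi.single_apply, hh] using hg h hh
  · simp only [Pi.sub_apply, Pi.single_eq_same]
    linarith
  · rcases eq_or_ne h h' with rfl | hh
    · simpa using hsx
    · simpa [Pi.single_apply, hh] using hx h
  · rcases eq_or_ne h h' with rfl | hh
    · simpa using hty
    · simpa [Pi.single_apply, hh] using hy h

theorem PertCost_sub_single (hab : a h' * s = b h' * t) :
    PertCost H m α β a b f K (x - Pi.single h' s) (y - Pi.single h' t) u =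
      PertCost H m α β a b f K x y u - (α h' * s + β h' * t) := by
  simp only [PertCost, Finset.sum_add_distrib, Finset.sum_sub_distrib,
    Finset.sum_mul_sub_single, hab, sub_sub_sub_cancel_right]
  ring

theorem psi_le_PertCost
    (hbdd : BddBelow {c : ℝ | ∃ x y : Fin H → ℝ, ∃ u : Fin H → Fin m → ℝ,
      PertFeasible H m h' g Cu Cy ε x y u ∧ c = PertCost H m α β a b f K x y u})
    (hfeas : PertFeasible H m h' g Cu Cy ε x y u) :
    psi H m h' α β a b g Cu Cy f K ε ≤ PertCost H m α β a b f K x y u :=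
  csInf_le hbdd ⟨x, y, u, hfeas, rfl⟩

end Perturbed

theorem multiplier_lower_bound_general
    (H m : ℕ) (h' : Fin H)
    (α β a b : Fin H → ℝ)
    (ha : ∀ h, 0 < a h) (hb : ∀ h, 0 < b h)
    (Cu : Set (Fin H → Fin m → ℝ))
    (Cy : Set (Fin H → ℝ))
    (hCydown : ∀ y ∈ Cy, ∀ y' : Fin H → ℝ, (∀ h, y' h ≤ y h) → y' ∈ Cy)
    (f : (Fin H → Fin m → ℝ) → ℝ)
    (g : Fin H → (Fin m → ℝ) → ℝ)
    (K : ℝ → ℝ)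
    (hbdd : ∀ ε : ℝ, 0 ≤ ε → BddBelow
      {c : ℝ | ∃ x y : Fin H → ℝ, ∃ u : Fin H → Fin m → ℝ,
        PertFeasible H m h' g Cu Cy ε x y u ∧ c = PertCost H m α β a b f K x y u})
    (x0 y0 : Fin H → ℝ) (u0 : Fin H → Fin m → ℝ)
    (hfeas0 : PertFeasible H m h' g Cu Cy 0 x0 y0 u0)
    (hopt : PertCost H m α β a b f K x0 y0 u0 = psi H m h' α β a b g Cu Cy f K 0)
    (hx0 : 0 < x0 h') (hy0 : 0 < y0 h')
    (lam : ℝ)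
    (hsub : ∀ ε : ℝ, 0 ≤ ε →
      psi H m h' α β a b g Cu Cy f K 0 - lam * ε ≤
        psi H m h' α β a b g Cu Cy f K ε) :
    lam ≥ (α h' * b h' + β h' * a h') / (a h' + b h') := by
  have hA := ha h'
  have hB := hb h'
  obtain ⟨r, hr, hrx, hry⟩ : ∃ r > 0, r * b h' ≤ x0 h' ∧ r * a h' ≤ y0 h' :=
    ⟨min (x0 h' / b h') (y0 h' / a h'), lt_min (div_pos hx0 hB) (div_pos hy0 hA),
      (le_div_iff₀ hB).1 (min_le_left _ _), (le_div_iff₀ hA).1 (min_le_right _ _)⟩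
  have hfeas := hfeas0.sub_single (fun y y' hle hy => hCydown y hy y' hle) hrx
    (by positivity) hry
  have hε : 0 ≤ 0 + (r * b h' + r * a h') := by positivity
  have hdrop := (psi_le_PertCost (hbdd _ hε) hfeas).trans_eq
    (PertCost_sub_single (f := f) (K := K) (α := α) (β := β) (by ring))
  have hsubgrad := hsub _ hε
  rw [ge_iff_le, div_le_iff₀ (add_pos hA hB)]
  refine le_of_mul_le_mul_left ?_ hr
  linarith

/-- Lemma 1: lower bound on the Lagrange multiplier associated with the
perturbed constraint. -/
theorem multiplier_lower_bound
    (H m : ℕ) (hH : 1 ≤ H) (h' : Fin H)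
    (α β a b : Fin H → ℝ)
    (hα : ∀ h, 0 < α h) (hβ : ∀ h, 0 < β h)
    (ha : ∀ h, 0 < a h) (hb : ∀ h, 0 < b h)
    (Cu : Set (Fin H → Fin m → ℝ)) (hCu : Convex ℝ Cu)
    (Cy : Set (Fin H → ℝ)) (hCy : Convex ℝ Cy)
    (hCydown : ∀ y ∈ Cy, ∀ y' : Fin H → ℝ, (∀ h, y' h ≤ y h) → y' ∈ Cy)
    (f : (Fin H → Fin m → ℝ) → ℝ) (hf : ConvexOn ℝ Set.univ f)
    (g : Fin H → (Fin m → ℝ) → ℝ) (hg : ∀ h, ConvexOn ℝ Set.univ (g h))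
    (K : ℝ → ℝ) (hK : ConvexOn ℝ Set.univ K)
    (hbdd : ∀ ε : ℝ, 0 ≤ ε → BddBelow
      {c : ℝ | ∃ x y : Fin H → ℝ, ∃ u : Fin H → Fin m → ℝ,
        PertFeasible H m h' g Cu Cy ε x y u ∧ c = PertCost H m α β a b f K x y u})
    (x0 y0 : Fin H → ℝ) (u0 : Fin H → Fin m → ℝ)
    (hfeas0 : PertFeasible H m h' g Cu Cy 0 x0 y0 u0)
    (hopt : PertCost H m α β a b f K x0 y0 u0 = psi H m h' α β a b g Cu Cy f K 0)
    (hx0 : 0 < x0 h') (hy0 : 0 < y0 h')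
    (lam : ℝ)
    (hsub : ∀ ε : ℝ, 0 ≤ ε →
      psi H m h' α β a b g Cu Cy f K 0 - lam * ε ≤
        psi H m h' α β a b g Cu Cy f K ε) :
    lam ≥ (α h' * b h' + β h' * a h') / (a h' + b h') :=
  multiplier_lower_bound_general H m h' α β a b ha hb Cu Cy hCydown f g K hbdd x0 y0 u0 hfeas0 hopt
    hx0 hy0 lam hsub
end
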